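/- Let N_{αβμν} (α,β,μ,ν∈{0,1,2}) be real coefficients satisfying the symmetry condition and the null condition. There exists a constant C>0, depending only on the coefficients, such that for every multi-index a, every sufficiently smooth (C^{|a|+4}) real-valued function u defined near a point (t,x)∈ℝ^{1+2} with t≥0 and |x|≥1, the quantity F₃(u) := Σ N_{αβμν} ∂_β Γ^a u · ∂_t Γ^a u · ∂_α∂_μ∂_ν u satisfies |F₃(u)(t,x)| ≤ C [ Σ_{i=1,2} |((ω_i∂_t+∂_i)Γ^a u)| · |∂_tΓ^a u| · |∂³u| + (1/|x|)·|∂_tΓ^a u|²·(|∂Γ²u| + |∂Γu| + |∂u|) ](t,x). -/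

import Mathlib

/-! By the null condition, `F₃` does not change when `N(ξ, ξ, ξ, ξ) (∂_tΓ^a u)² ∂_t³u` is
subtracted from it, where `ξ = (1, -ω)` is a null vector. Replacing each `∂_α` by `ξ_α ∂_t` then
costs only good derivatives `∂_i + ω_i ∂_t`, either of `Γ^a u` or of a second derivative of `u`.
The latter are `O(1/r)`: `(t + r) r (∂_i + ω_i ∂_t)` is a combination of `S`, `L_i` and `Ω` with
coefficients bounded by `r`, and commuting a field `Γ = (A x + b) · ∇ - κ` past `∂_μ` only produces
the first-order term `(A e_μ) · ∇`. -/

noncomputable section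

open MeasureTheory Real Set

/-- Partial derivative in coordinate direction `i` on space-time `ℝ³`
(coordinate `0` is time, coordinates `1, 2` are space). -/
def pd (i : Fin 3) (u : (Fin 3 → ℝ) → ℝ) : (Fin 3 → ℝ) → ℝ :=
  fun X => fderiv ℝ u X (Pi.single i 1)

/-- The d'Alembertian `□ = ∂_t² - ∂₁² - ∂₂²`. -/
def box (u : (Fin 3 → ℝ) → ℝ) : (Fin 3 → ℝ) → ℝ :=
  fun X => pd 0 (pd 0 u) X - pd 1 (pd 1 u) X - pd 2 (pd 2 u) X

/-- The seven Klainerman vector fields `Γ = (∂_t, ∂₁, ∂₂, Ω, L₁, L₂, S̃)`. -/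
def Gamma (i : Fin 7) (u : (Fin 3 → ℝ) → ℝ) : (Fin 3 → ℝ) → ℝ :=
  if i = 0 then pd 0 u
  else if i = 1 then pd 1 u
  else if i = 2 then pd 2 u
  else if i = 3 then fun X => -(X 2) * pd 1 u X + X 1 * pd 2 u X
  else if i = 4 then fun X => X 0 * pd 1 u X + X 1 * pd 0 u X
  else if i = 5 then fun X => X 0 * pd 2 u X + X 2 * pd 0 u X
  else fun X => X 0 * pd 0 u X + X 1 * pd 1 u X + X 2 * pd 2 u X - 2 * u X

/-- `Γ^a` for a multi-index `a = (a₁,…,a₇) ∈ ℕ⁷`. -/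
def GammaPow (a : Fin 7 → ℕ) (u : (Fin 3 → ℝ) → ℝ) : (Fin 3 → ℝ) → ℝ :=
  (Gamma 0)^[a 0] <| (Gamma 1)^[a 1] <| (Gamma 2)^[a 2] <| (Gamma 3)^[a 3] <|
    (Gamma 4)^[a 4] <| (Gamma 5)^[a 5] <| (Gamma 6)^[a 6] u

/-- The point `(t, x) ∈ ℝ^{1+2}`. -/
def pt (t : ℝ) (x : ℝ × ℝ) : Fin 3 → ℝ := ![t, x.1, x.2]

/-- `|∂v|²` at a point. -/
def pdSq (v : (Fin 3 → ℝ) → ℝ) (X : Fin 3 → ℝ) : ℝ :=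
  (pd 0 v X) ^ 2 + (pd 1 v X) ^ 2 + (pd 2 v X) ^ 2

/-- The spatial radius `r = |x|` of a space-time point. -/
def rad (X : Fin 3 → ℝ) : ℝ := Real.sqrt ((X 1) ^ 2 + (X 2) ^ 2)

/-- Multi-indices `a ∈ ℕ⁷` with `|a| ≤ k`. -/
def multiIndex7 (k : ℕ) : Finset (Fin 7 → ℕ) :=
  (Fintype.piFinset fun _ => Finset.range (k + 1)).filter fun a => ∑ i, a i ≤ k

/-- The generalized energy `E_k(u(t)) = (1/2) ∑_{|a| ≤ k-1} ∫ |∂Γ^a u|² dx`. -/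
def energy (k : ℕ) (u : (Fin 3 → ℝ) → ℝ) (t : ℝ) : ℝ :=
  (1 / 2) * ∑ a ∈ multiIndex7 (k - 1), ∫ x : ℝ × ℝ, pdSq (GammaPow a u) (pt t x)

/-- Partial derivatives on the plane `ℝ²`. -/
def pdx (i : Fin 2) (f : ℝ × ℝ → ℝ) : ℝ × ℝ → ℝ :=
  fun x => fderiv ℝ f x (if i = 0 then (1, 0) else (0, 1))

/-- The fields `Λ = (∂₁, ∂₂, r∂_r, Ω)` on `ℝ²`. -/
def Lam (i : Fin 4) (f : ℝ × ℝ → ℝ) : ℝ × ℝ → ℝ :=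
  if i = 0 then pdx 0 f
  else if i = 1 then pdx 1 f
  else if i = 2 then fun x => x.1 * pdx 0 f x + x.2 * pdx 1 f x
  else fun x => -x.2 * pdx 0 f x + x.1 * pdx 1 f x

/-- `Λ^a` for a multi-index `a ∈ ℕ⁴`. -/
def LamPow (a : Fin 4 → ℕ) (f : ℝ × ℝ → ℝ) : ℝ × ℝ → ℝ :=
  (Lam 0)^[a 0] <| (Lam 1)^[a 1] <| (Lam 2)^[a 2] <| (Lam 3)^[a 3] f

/-- Multi-indices `a ∈ ℕ⁴` with `|a| ≤ k`. -/
def multiIndex4 (k : ℕ) : Finset (Fin 4 → ℕ) :=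
  (Fintype.piFinset fun _ => Finset.range (k + 1)).filter fun a => ∑ i, a i ≤ k

/-- The `L²(ℝ²)` norm. -/
def L2 (f : ℝ × ℝ → ℝ) : ℝ := (eLpNorm f 2 volume).toReal

/-- `|∇f|` for a function on `ℝ²`. -/
def gradAbs (f : ℝ × ℝ → ℝ) : ℝ × ℝ → ℝ :=
  fun x => Real.sqrt ((pdx 0 f x) ^ 2 + (pdx 1 f x) ^ 2)

/-- Membership `(f, g) ∈ H^k_Λ`. -/
def MemHLam (k : ℕ) (f g : ℝ × ℝ → ℝ) : Prop :=
  ∀ a ∈ multiIndex4 (k - 1),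
    MemLp (LamPow a f) 2 (volume : Measure (ℝ × ℝ)) ∧
    MemLp (gradAbs (LamPow a f)) 2 (volume : Measure (ℝ × ℝ)) ∧
    MemLp (LamPow a g) 2 (volume : Measure (ℝ × ℝ))

/-- The norm `‖(f, g)‖_{H^k_Λ} = ∑_{|a| ≤ k-1} (‖∇Λ^a f‖_{L²} + ‖Λ^a g‖_{L²})`. -/
def HLamNorm (k : ℕ) (f g : ℝ × ℝ → ℝ) : ℝ :=
  ∑ a ∈ multiIndex4 (k - 1), (L2 (gradAbs (LamPow a f)) + L2 (LamPow a g))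

/-- The Japanese bracket `⟨t⟩ = √(1 + t²)`. -/
def jb (t : ℝ) : ℝ := Real.sqrt (1 + t ^ 2)

/-- The null condition for the coefficients `N_{αβμν}`. -/
def NullCond (N : Fin 3 → Fin 3 → Fin 3 → Fin 3 → ℝ) : Prop :=
  ∀ X : Fin 3 → ℝ, (X 0) ^ 2 = (X 1) ^ 2 + (X 2) ^ 2 →
    ∑ α : Fin 3, ∑ β : Fin 3, ∑ μ : Fin 3, ∑ ν : Fin 3,
      N α β μ ν * X α * X β * X μ * X ν = 0

/-- The symmetry condition `N_{αβμν} = N_{βαμν} = N_{αβνμ}`. -/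
def SymCond (N : Fin 3 → Fin 3 → Fin 3 → Fin 3 → ℝ) : Prop :=
  ∀ α β μ ν, N α β μ ν = N β α μ ν ∧ N α β μ ν = N α β ν μ

/-- The quadratic nonlinearity `N(u, v) = ∑ N_{αβμν} ∂_α∂_β u ∂_μ∂_ν v`. -/
def NL (N : Fin 3 → Fin 3 → Fin 3 → Fin 3 → ℝ) (u v : (Fin 3 → ℝ) → ℝ) :
    (Fin 3 → ℝ) → ℝ :=
  fun X => ∑ α : Fin 3, ∑ β : Fin 3, ∑ μ : Fin 3, ∑ ν : Fin 3,
    N α β μ ν * pd α (pd β u) X * pd μ (pd ν v) X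

/-- A global classical solution of `□u = N(u, u)` on `[0, ∞) × ℝ²` with data `(φ, ψ)`. -/
def IsGlobalSolution (N : Fin 3 → Fin 3 → Fin 3 → Fin 3 → ℝ)
    (φ ψ : ℝ × ℝ → ℝ) (u : (Fin 3 → ℝ) → ℝ) : Prop :=
  ContDiff ℝ 2 u ∧
  (∀ X : Fin 3 → ℝ, 0 ≤ X 0 → box u X = NL N u u X) ∧
  (∀ x : ℝ × ℝ, u (pt 0 x) = φ x ∧ pd 0 u (pt 0 x) = ψ x)

/-- The quadratic nonlinearity `∑ N_{μδ} ∂_μ v ∂_δ v` of the quasilinear equation. -/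
def QNL (N : Fin 3 → Fin 3 → ℝ) (v : (Fin 3 → ℝ) → ℝ) : (Fin 3 → ℝ) → ℝ :=
  fun X => ∑ μ : Fin 3, ∑ δ : Fin 3, N μ δ * pd μ v X * pd δ v X

/-- The null condition for the coefficients `N_{μδ}`. -/
def NullCond2 (N : Fin 3 → Fin 3 → ℝ) : Prop :=
  ∀ X : Fin 3 → ℝ, (X 0) ^ 2 = (X 1) ^ 2 + (X 2) ^ 2 →
    ∑ μ : Fin 3, ∑ δ : Fin 3, N μ δ * X μ * X δ = 0

/-- A global classical solution of `□v = ∑ A_l ∂_l (∑ N_{μδ} ∂_μ v ∂_δ v)` with data `(v₀, v₁)`. -/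
def IsGlobalQSolution (A : Fin 3 → ℝ) (N : Fin 3 → Fin 3 → ℝ)
    (v₀ v₁ : ℝ × ℝ → ℝ) (v : (Fin 3 → ℝ) → ℝ) : Prop :=
  ContDiff ℝ 2 v ∧
  (∀ X : Fin 3 → ℝ, 0 ≤ X 0 → box v X = ∑ l : Fin 3, A l * pd l (QNL N v) X) ∧
  (∀ x : ℝ × ℝ, v (pt 0 x) = v₀ x ∧ pd 0 v (pt 0 x) = v₁ x)


/-- `|∂v|` at a point. -/
def absPd (v : (Fin 3 → ℝ) → ℝ) (X : Fin 3 → ℝ) : ℝ := Real.sqrt (pdSq v X)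

/-- `|∂Γu|` at a point: the sum over the seven fields `Γ'` of `|∂Γ'u|`. -/
def absPdGam (u : (Fin 3 → ℝ) → ℝ) (X : Fin 3 → ℝ) : ℝ :=
  ∑ i : Fin 7, absPd (Gamma i u) X

/-- `|∂Γ²u|` at a point: the sum over pairs of fields `Γ', Γ''` of `|∂Γ'Γ''u|`. -/
def absPdGam2 (u : (Fin 3 → ℝ) → ℝ) (X : Fin 3 → ℝ) : ℝ :=
  ∑ i : Fin 7, ∑ j : Fin 7, absPd (Gamma i (Gamma j u)) X

/-- `|∂³u|` at a point: the Euclidean norm of all third-order space-time derivatives. -/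
def absPd3 (u : (Fin 3 → ℝ) → ℝ) (X : Fin 3 → ℝ) : ℝ :=
  Real.sqrt (∑ i : Fin 3, ∑ j : Fin 3, ∑ l : Fin 3, (pd i (pd j (pd l u)) X) ^ 2)

section Calculus

variable {z : (Fin 3 → ℝ) → ℝ} {X : Fin 3 → ℝ}

lemma fderiv_apply_eq_sum_pd (w : Fin 3 → ℝ) :
    fderiv ℝ z X w = ∑ l, w l * pd l z X := by
  conv_lhs => rw [← Finset.univ_sum_single w]
  simp only [map_sum, pd]
  refine Finset.sum_congr rfl fun l _ => ?_
  rw [← smul_eq_mul, ← map_smul, ← Pi.single_smul, smul_eq_mul, mul_one]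

lemma fderiv_pd_apply (hz : DifferentiableAt ℝ (fderiv ℝ z) X) (i : Fin 3) (w : Fin 3 → ℝ) :
    fderiv ℝ (pd i z) X w = fderiv ℝ (fderiv ℝ z) X w (Pi.single i 1) := by
  change fderiv ℝ (fun Y => fderiv ℝ z Y (Pi.single i 1)) X w = _
  simp [fderiv_clm_apply hz (differentiableAt_const _)]

lemma pd_comm (hz : ContDiffAt ℝ 2 z X) (i j : Fin 3) :
    pd i (pd j z) X = pd j (pd i z) X := by
  have hd : DifferentiableAt ℝ (fderiv ℝ z) X :=
    (hz.fderiv_right (m := 1) le_rfl).differentiableAt one_ne_zero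
  change fderiv ℝ (pd j z) X (Pi.single i 1) = fderiv ℝ (pd i z) X (Pi.single j 1)
  rw [fderiv_pd_apply hd, fderiv_pd_apply hd]
  exact hz.isSymmSndFDerivAt (by simp) _ _

lemma ContDiffAt.pd {n : WithTop ℕ∞} (hz : ContDiffAt ℝ (n + 1) z X) (i : Fin 3) :
    ContDiffAt ℝ n (pd i z) X :=
  (hz.fderiv_right le_rfl).clm_apply contDiffAt_const

end Calculus

open Matrix

section VectorFields

variable {z : (Fin 3 → ℝ) → ℝ} {X : Fin 3 → ℝ}

def gammaMatrix : Fin 7 → Matrix (Fin 3) (Fin 3) ℝ :=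
  ![0, 0, 0, !![0, 0, 0; 0, 0, -1; 0, 1, 0], !![0, 1, 0; 1, 0, 0; 0, 0, 0],
    !![0, 0, 1; 0, 0, 0; 1, 0, 0], 1]

def gammaShift : Fin 7 → Fin 3 → ℝ :=
  ![Pi.single 0 1, Pi.single 1 1, Pi.single 2 1, 0, 0, 0, 0]

def gammaWeight : Fin 7 → ℝ := ![0, 0, 0, 0, 0, 0, 2]

lemma Gamma_eq_fderiv (j : Fin 7) (z : (Fin 3 → ℝ) → ℝ) :
    Gamma j z = fun Y =>
      fderiv ℝ z Y (gammaMatrix j *ᵥ Y + gammaShift j) - gammaWeight j * z Y := by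
  funext Y
  rw [fderiv_apply_eq_sum_pd]
  fin_cases j <;>
    simp [_root_.Gamma, gammaMatrix, gammaShift, gammaWeight, dotProduct,
      Fin.sum_univ_three] <;> ring

lemma abs_gammaMatrix_le_one (j : Fin 7) (l μ : Fin 3) : |gammaMatrix j l μ| ≤ 1 := by
  fin_cases j <;> fin_cases l <;> fin_cases μ <;> norm_num [gammaMatrix, one_apply]

lemma pd_Gamma_eq_Gamma_pd_add (hz : ContDiffAt ℝ 2 z X) (j : Fin 7) (μ : Fin 3) :
    pd μ (Gamma j z) X = Gamma j (pd μ z) X + fderiv ℝ z X (gammaMatrix j *ᵥ Pi.single μ 1) := by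
  have hd : DifferentiableAt ℝ (fderiv ℝ z) X :=
    (hz.fderiv_right (m := 1) le_rfl).differentiableAt one_ne_zero
  have hV : HasFDerivAt (fun Y => gammaMatrix j *ᵥ Y + gammaShift j)
      (mulVecLin (gammaMatrix j)).toContinuousLinearMap X :=
    ((mulVecLin (gammaMatrix j)).toContinuousLinearMap.hasFDerivAt (x := X)).add_const _
  have hF : DifferentiableAt ℝ
      (fun Y => fderiv ℝ z Y (gammaMatrix j *ᵥ Y + gammaShift j)) X :=
    hd.clm_apply hV.differentiableAt
  have hsymm := hz.isSymmSndFDerivAt (by simp) (Pi.single μ 1)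
    (gammaMatrix j *ᵥ X + gammaShift j)
  rw [Gamma_eq_fderiv, Gamma_eq_fderiv]
  simp only [pd]
  rw [fderiv_fun_sub hF ((hz.differentiableAt two_ne_zero).const_mul _),
    fderiv_clm_apply hd hV.differentiableAt, hV.fderiv,
    fderiv_const_mul (hz.differentiableAt two_ne_zero), fderiv_pd_apply hd, ← hsymm]
  simp only [FunLike.coe_sub, FunLike.coe_add, FunLike.coe_smul, Pi.sub_apply, Pi.add_apply,
    Pi.smul_apply, ContinuousLinearMap.comp_apply, ContinuousLinearMap.flip_apply,
    LinearMap.coe_toContinuousLinearMap', mulVecLin_apply, smul_eq_mul]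
  ring

end VectorFields

section Norms

variable {z u : (Fin 3 → ℝ) → ℝ} {X : Fin 3 → ℝ}

lemma absPd_nonneg : 0 ≤ absPd z X := Real.sqrt_nonneg _

lemma absPdGam_nonneg : 0 ≤ absPdGam u X := Finset.sum_nonneg fun _ _ => absPd_nonneg

lemma absPdGam2_nonneg : 0 ≤ absPdGam2 u X :=
  Finset.sum_nonneg fun _ _ => Finset.sum_nonneg fun _ _ => absPd_nonneg

lemma absPd3_nonneg : 0 ≤ absPd3 u X := Real.sqrt_nonneg _

lemma abs_pd_le_absPd (i : Fin 3) : |pd i z X| ≤ absPd z X := by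
  refine Real.abs_le_sqrt ?_
  rw [pdSq, ← Fin.sum_univ_three fun i => pd i z X ^ 2]
  exact Finset.single_le_sum (f := fun i => pd i z X ^ 2) (fun _ _ => sq_nonneg _)
    (Finset.mem_univ i)

lemma abs_fderiv_apply_le_absPd {w : Fin 3 → ℝ} (hw : ∀ l, |w l| ≤ 1) :
    |fderiv ℝ z X w| ≤ 3 * absPd z X := by
  rw [fderiv_apply_eq_sum_pd]
  calc |∑ l, w l * pd l z X| ≤ ∑ l, |w l| * |pd l z X| :=
        (Finset.abs_sum_le_sum_abs _ _).trans_eq (by simp only [abs_mul])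
    _ ≤ ∑ _l : Fin 3, 1 * absPd z X := by
        gcongr with l; exact hw l; exact abs_pd_le_absPd l
    _ = 3 * absPd z X := by simp

lemma abs_Gamma_pd_le (hz : ContDiffAt ℝ 2 z X) (j : Fin 7) (μ : Fin 3) :
    |Gamma j (pd μ z) X| ≤ absPd (Gamma j z) X + 3 * absPd z X := by
  have hcomm := pd_Gamma_eq_Gamma_pd_add hz j μ
  have hw : ∀ l, |(gammaMatrix j *ᵥ Pi.single μ 1) l| ≤ 1 := fun l => by
    simpa [Matrix.mulVec_single_one] using abs_gammaMatrix_le_one j l μ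
  calc |Gamma j (pd μ z) X|
      = |pd μ (Gamma j z) X - fderiv ℝ z X (gammaMatrix j *ᵥ Pi.single μ 1)| := by
        rw [hcomm, add_sub_cancel_right]
    _ ≤ |pd μ (Gamma j z) X| + |fderiv ℝ z X (gammaMatrix j *ᵥ Pi.single μ 1)| := abs_sub _ _
    _ ≤ absPd (Gamma j z) X + 3 * absPd z X :=
        add_le_add (abs_pd_le_absPd μ) (abs_fderiv_apply_le_absPd hw)

lemma Gamma_castLE (ν : Fin 3) : Gamma (Fin.castLE (by norm_num) ν) u = pd ν u := by
  fin_cases ν <;> rfl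

lemma absPd_pd_le_absPdGam (ν : Fin 3) : absPd (pd ν u) X ≤ absPdGam u X := by
  rw [← Gamma_castLE]
  exact Finset.single_le_sum (f := fun i => absPd (Gamma i u) X)
    (fun _ _ => absPd_nonneg) (Finset.mem_univ _)

lemma absPd_Gamma_pd_le_absPdGam2 (j : Fin 7) (ν : Fin 3) :
    absPd (Gamma j (pd ν u)) X ≤ absPdGam2 u X := by
  rw [← Gamma_castLE]
  calc absPd (Gamma j (Gamma (Fin.castLE _ ν) u)) X
      ≤ ∑ k : Fin 7, absPd (Gamma j (Gamma k u)) X :=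
        Finset.single_le_sum (f := fun k => absPd (Gamma j (Gamma k u)) X)
          (fun _ _ => absPd_nonneg) (Finset.mem_univ _)
    _ ≤ absPdGam2 u X :=
        Finset.single_le_sum (f := fun i => ∑ k : Fin 7, absPd (Gamma i (Gamma k u)) X)
          (fun _ _ => Finset.sum_nonneg fun _ _ => absPd_nonneg) (Finset.mem_univ j)

lemma abs_pd_pd_pd_le_absPd3 (α μ ν : Fin 3) : |pd α (pd μ (pd ν u)) X| ≤ absPd3 u X := by
  refine Real.abs_le_sqrt ?_
  have hsq : ∀ i j l : Fin 3, 0 ≤ (pd i (pd j (pd l u)) X) ^ 2 := fun _ _ _ => sq_nonneg _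
  calc (pd α (pd μ (pd ν u)) X) ^ 2
      ≤ ∑ l : Fin 3, (pd α (pd μ (pd l u)) X) ^ 2 :=
        Finset.single_le_sum (fun l _ => hsq α μ l) (Finset.mem_univ ν)
    _ ≤ ∑ j : Fin 3, ∑ l : Fin 3, (pd α (pd j (pd l u)) X) ^ 2 :=
        Finset.single_le_sum (fun j _ => Finset.sum_nonneg fun l _ => hsq α j l)
          (Finset.mem_univ μ)
    _ ≤ _ :=
        Finset.single_le_sum (fun i _ => Finset.sum_nonneg fun j _ =>
          Finset.sum_nonneg fun l _ => hsq i j l) (Finset.mem_univ α)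

end Norms

-- At `(t, a, b)`, with `p₀, pa, pb` the values of `∂_t w, ∂_a w, ∂_b w`, the three numerators
-- are `|Ω w|`, `|L_a w|` and `|S w|`.
lemma abs_div_sqrt_mul_add_le {t a b p₀ pa pb : ℝ} (ht : 0 ≤ t) (hr : 0 < √(a ^ 2 + b ^ 2)) :
    |a / √(a ^ 2 + b ^ 2) * p₀ + pa| ≤
      (|a * pb - b * pa| + |t * pa + a * p₀| + |t * p₀ + a * pa + b * pb|) / √(a ^ 2 + b ^ 2) := by
  set r := √(a ^ 2 + b ^ 2)
  have hr2 : r ^ 2 = a ^ 2 + b ^ 2 := Real.sq_sqrt (by positivity)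
  have ha : |a| ≤ r := Real.abs_le_sqrt (by nlinarith [sq_nonneg b])
  have hb : |b| ≤ r := Real.abs_le_sqrt (by nlinarith [sq_nonneg a])
  set Ω := a * pb - b * pa
  set L := t * pa + a * p₀
  set S := t * p₀ + a * pa + b * pb
  have key : (t + r) * (r * pa + a * p₀) = a * S + r * L - b * Ω := by
    linear_combination pa * hr2
  have hbound : |r * pa + a * p₀| * r ≤ r * (|Ω| + |L| + |S|) :=
    calc |r * pa + a * p₀| * r ≤ |r * pa + a * p₀| * (t + r) := by gcongr; linarith
      _ = |a * S + r * L - b * Ω| := by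
        rw [← key, abs_mul, abs_of_nonneg (show 0 ≤ t + r by linarith), mul_comm]
      _ ≤ |a| * |S| + r * |L| + |b| * |Ω| := by
        have hrL : |r * L| = r * |L| := by rw [abs_mul, abs_of_pos hr]
        linarith [abs_sub (a * S + r * L) (b * Ω), abs_add_le (a * S) (r * L), abs_mul a S,
          abs_mul b Ω]
      _ ≤ r * (|Ω| + |L| + |S|) := by
        nlinarith [abs_nonneg S, abs_nonneg Ω, mul_le_mul_of_nonneg_right ha (abs_nonneg S),
          mul_le_mul_of_nonneg_right hb (abs_nonneg Ω)]
  have hcomb : a / r * p₀ + pa = (r * pa + a * p₀) / r := by field_simp; ring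
  rw [hcomb, abs_div, abs_of_pos hr]
  gcongr
  nlinarith

def nullDir (X : Fin 3 → ℝ) : Fin 3 → ℝ := ![1, -(X 1 / rad X), -(X 2 / rad X)]

def goodPd (α : Fin 3) (w : (Fin 3 → ℝ) → ℝ) (X : Fin 3 → ℝ) : ℝ :=
  pd α w X - nullDir X α * pd 0 w X

section NullFrame

variable {X : Fin 3 → ℝ}

lemma goodPd_zero (w : (Fin 3 → ℝ) → ℝ) : goodPd 0 w X = 0 := by simp [goodPd, nullDir]

lemma goodPd_of_ne_zero {i : Fin 3} (hi : i ≠ 0) (w : (Fin 3 → ℝ) → ℝ) :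
    goodPd i w X = X i / rad X * pd 0 w X + pd i w X := by
  fin_cases i
  · exact absurd rfl hi
  all_goals simp [goodPd, nullDir, add_comm]

lemma nullDir_sq (hr : rad X ≠ 0) : nullDir X 0 ^ 2 = nullDir X 1 ^ 2 + nullDir X 2 ^ 2 := by
  have hr2 : rad X ^ 2 = X 1 ^ 2 + X 2 ^ 2 := Real.sq_sqrt (by positivity)
  simp only [nullDir, Matrix.cons_val]
  field_simp
  linarith

lemma abs_nullDir_le_one (k : Fin 3) : |nullDir X k| ≤ 1 := by
  have hX : ∀ i j : Fin 3, |X i / √(X i ^ 2 + X j ^ 2)| ≤ 1 := fun i j => by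
    rw [abs_div, abs_of_nonneg (Real.sqrt_nonneg _)]
    exact div_le_one_of_le₀ (Real.abs_le_sqrt (by nlinarith [sq_nonneg (X j)]))
      (Real.sqrt_nonneg _)
  fin_cases k
  · simp [nullDir]
  · simpa [nullDir, rad] using hX 1 2
  · simpa [nullDir, rad, add_comm] using hX 2 1

lemma abs_goodPd_le (ht : 0 ≤ X 0) (hr : 0 < rad X) (α : Fin 3) (w : (Fin 3 → ℝ) → ℝ) :
    |goodPd α w X| ≤
      (|Gamma 3 w X| + |Gamma 4 w X| + |Gamma 5 w X| + |Gamma 6 w X| + 2 * |w X|) / rad X := by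
  have hS : |Gamma 6 w X + 2 * w X| ≤ |Gamma 6 w X| + 2 * |w X| := by
    simpa [abs_mul] using abs_add_le (Gamma 6 w X) (2 * w X)
  have hG : ∀ j : Fin 7, 0 ≤ |Gamma j w X| := fun _ => abs_nonneg _
  fin_cases α
  · show |goodPd 0 w X| ≤ _
    rw [goodPd_zero, abs_zero]
    have := hG 3; have := hG 4; have := hG 5; have := hG 6
    positivity
  · have h := abs_div_sqrt_mul_add_le (p₀ := pd 0 w X) (pa := pd 1 w X) (pb := pd 2 w X) ht hr
    rw [show X 1 * pd 2 w X - X 2 * pd 1 w X = Gamma 3 w X by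
        show _ = -X 2 * pd 1 w X + X 1 * pd 2 w X; ring,
      show X 0 * pd 1 w X + X 1 * pd 0 w X = Gamma 4 w X from rfl,
      show X 0 * pd 0 w X + X 1 * pd 1 w X + X 2 * pd 2 w X = Gamma 6 w X + 2 * w X by
        show _ = X 0 * pd 0 w X + X 1 * pd 1 w X + X 2 * pd 2 w X - 2 * w X + _; ring] at h
    calc |goodPd 1 w X| = _ := by rw [goodPd_of_ne_zero (by decide)]; rfl
      _ ≤ _ := h
      _ ≤ _ := div_le_div_of_nonneg_right (by linarith [hG 5]) hr.le
  · have hr' : 0 < √(X 2 ^ 2 + X 1 ^ 2) := by rwa [add_comm]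
    have h := abs_div_sqrt_mul_add_le (p₀ := pd 0 w X) (pa := pd 2 w X) (pb := pd 1 w X) ht hr'
    rw [add_comm (X 2 ^ 2), show X 2 * pd 1 w X - X 1 * pd 2 w X = -Gamma 3 w X by
        show _ = -(-X 2 * pd 1 w X + X 1 * pd 2 w X); ring,
      show X 0 * pd 2 w X + X 2 * pd 0 w X = Gamma 5 w X from rfl,
      show X 0 * pd 0 w X + X 2 * pd 2 w X + X 1 * pd 1 w X = Gamma 6 w X + 2 * w X by
        show _ = X 0 * pd 0 w X + X 1 * pd 1 w X + X 2 * pd 2 w X - 2 * w X + _; ring,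
      abs_neg] at h
    calc |goodPd 2 w X| = _ := by rw [goodPd_of_ne_zero (by decide)]; rfl
      _ ≤ _ := h
      _ ≤ _ := div_le_div_of_nonneg_right (by linarith [hG 4]) hr.le

end NullFrame

section ThirdDerivatives

variable {u : (Fin 3 → ℝ) → ℝ} {X : Fin 3 → ℝ}

lemma abs_goodPd_pd_pd_le (hu : ContDiffAt ℝ 3 u X) (ht : 0 ≤ X 0) (hr : 0 < rad X)
    (α μ ν : Fin 3) :
    |goodPd α (pd μ (pd ν u)) X| ≤ 14 * ((absPdGam2 u X + absPdGam u X) / rad X) := by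
  have hΓ : ∀ j, |Gamma j (pd μ (pd ν u)) X| ≤ absPdGam2 u X + 3 * absPdGam u X := fun j =>
    (abs_Gamma_pd_le (hu.pd ν) j μ).trans (add_le_add (absPd_Gamma_pd_le_absPdGam2 j ν)
      (mul_le_mul_of_nonneg_left (absPd_pd_le_absPdGam ν) (by norm_num)))
  have hw : |pd μ (pd ν u) X| ≤ absPdGam u X :=
    (abs_pd_le_absPd μ).trans (absPd_pd_le_absPdGam ν)
  rw [← mul_div_assoc]
  refine (abs_goodPd_le ht hr α _).trans (div_le_div_of_nonneg_right ?_ hr.le)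
  linarith [hΓ 3, hΓ 4, hΓ 5, hΓ 6, absPdGam2_nonneg (u := u) (X := X)]

lemma pd_pd_pd_sub_nullDir_eq (hu : ContDiffAt ℝ 3 u X) (α μ ν : Fin 3) :
    pd α (pd μ (pd ν u)) X -
        nullDir X α * nullDir X μ * nullDir X ν * pd 0 (pd 0 (pd 0 u)) X =
      goodPd α (pd μ (pd ν u)) X + nullDir X α * goodPd μ (pd 0 (pd ν u)) X +
        nullDir X α * nullDir X μ * goodPd ν (pd 0 (pd 0 u)) X := by
  have hμ : pd 0 (pd μ (pd ν u)) X = pd μ (pd 0 (pd ν u)) X := pd_comm (hu.pd ν) 0 μ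
  have hν : pd 0 (pd 0 (pd ν u)) X = pd ν (pd 0 (pd 0 u)) X := by
    have hev : pd 0 (pd ν u) =ᶠ[nhds X] pd ν (pd 0 u) := by
      filter_upwards [hu.eventually (by simp)] with Y hY
      exact pd_comm (hY.of_le (by norm_num)) 0 ν
    change fderiv ℝ (pd 0 (pd ν u)) X _ = _
    rw [hev.fderiv_eq]
    exact pd_comm (hu.pd 0) 0 ν
  simp only [goodPd]
  linear_combination nullDir X α * hμ + nullDir X α * nullDir X μ * hν

lemma abs_pd_pd_pd_sub_nullDir_le (hu : ContDiffAt ℝ 3 u X) (ht : 0 ≤ X 0) (hr : 0 < rad X)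
    (α μ ν : Fin 3) :
    |pd α (pd μ (pd ν u)) X -
        nullDir X α * nullDir X μ * nullDir X ν * pd 0 (pd 0 (pd 0 u)) X| ≤
      42 * ((absPdGam2 u X + absPdGam u X) / rad X) := by
  have hξ := abs_nullDir_le_one (X := X)
  have hαμ : |nullDir X α * nullDir X μ| ≤ 1 := by
    rw [abs_mul]; exact mul_le_one₀ (hξ α) (abs_nonneg _) (hξ μ)
  have hgood := abs_goodPd_pd_pd_le hu ht hr
  set K := 14 * ((absPdGam2 u X + absPdGam u X) / rad X)
  rw [pd_pd_pd_sub_nullDir_eq hu]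
  calc _ ≤ |goodPd α (pd μ (pd ν u)) X| + |nullDir X α| * |goodPd μ (pd 0 (pd ν u)) X| +
          |nullDir X α * nullDir X μ| * |goodPd ν (pd 0 (pd 0 u)) X| := by
        rw [← abs_mul, ← abs_mul]; exact abs_add_three _ _ _
    _ ≤ K + 1 * K + 1 * K := by
        gcongr
        exacts [hgood α μ ν, hξ α, hgood μ 0 ν, hgood ν 0 0]
    _ = _ := by ring

end ThirdDerivatives

lemma abs_goodPd_le_add (v : (Fin 3 → ℝ) → ℝ) (X : Fin 3 → ℝ) (β : Fin 3) :
    |goodPd β v X| ≤ |goodPd 1 v X| + |goodPd 2 v X| := by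
  have h1 := abs_nonneg (goodPd 1 v X); have h2 := abs_nonneg (goodPd 2 v X)
  fin_cases β
  · show |goodPd 0 v X| ≤ _
    rw [goodPd_zero, abs_zero]; positivity
  · exact le_add_of_nonneg_right h2
  · exact le_add_of_nonneg_left h1

lemma abs_sum_sum_sum_sum_le {ι : Type*} [Fintype ι] {f g : ι → ι → ι → ι → ℝ}
    (h : ∀ a b c d, |f a b c d| ≤ g a b c d) :
    |∑ a, ∑ b, ∑ c, ∑ d, f a b c d| ≤ ∑ a, ∑ b, ∑ c, ∑ d, g a b c d := by
  refine (Finset.abs_sum_le_sum_abs _ _).trans (Finset.sum_le_sum fun a _ => ?_)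
  refine (Finset.abs_sum_le_sum_abs _ _).trans (Finset.sum_le_sum fun b _ => ?_)
  refine (Finset.abs_sum_le_sum_abs _ _).trans (Finset.sum_le_sum fun c _ => ?_)
  exact (Finset.abs_sum_le_sum_abs _ _).trans (Finset.sum_le_sum fun d _ => h a b c d)

section NullForm

variable {u : (Fin 3 → ℝ) → ℝ} {X : Fin 3 → ℝ}

lemma abs_nullForm_term_sub_le (hu : ContDiffAt ℝ 3 u X) (ht : 0 ≤ X 0) (hr : 0 < rad X)
    (v : (Fin 3 → ℝ) → ℝ) (α β μ ν : Fin 3) :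
    |pd β v X * pd 0 v X * pd α (pd μ (pd ν u)) X -
        nullDir X α * nullDir X β * nullDir X μ * nullDir X ν *
          (pd 0 v X ^ 2 * pd 0 (pd 0 (pd 0 u)) X)| ≤
      (|goodPd 1 v X| + |goodPd 2 v X|) * |pd 0 v X| * absPd3 u X +
        pd 0 v X ^ 2 * (42 * ((absPdGam2 u X + absPdGam u X) / rad X)) := by
  set D := pd α (pd μ (pd ν u)) X
  set D₀ := nullDir X α * nullDir X μ * nullDir X ν * pd 0 (pd 0 (pd 0 u)) X
  have hsplit : pd β v X * pd 0 v X * D -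
      nullDir X α * nullDir X β * nullDir X μ * nullDir X ν *
        (pd 0 v X ^ 2 * pd 0 (pd 0 (pd 0 u)) X) =
      goodPd β v X * pd 0 v X * D + nullDir X β * pd 0 v X ^ 2 * (D - D₀) := by
    simp only [goodPd, D₀]; ring
  rw [hsplit]
  refine (abs_add_le _ _).trans (add_le_add ?_ ?_)
  · rw [abs_mul, abs_mul]
    gcongr
    exacts [abs_goodPd_le_add v X β, abs_pd_pd_pd_le_absPd3 α μ ν]
  · rw [abs_mul, abs_mul, abs_pow, sq_abs]
    calc |nullDir X β| * pd 0 v X ^ 2 * |D - D₀| ≤ 1 * pd 0 v X ^ 2 * |D - D₀| := by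
          gcongr; exact abs_nullDir_le_one β
      _ ≤ _ := by
          rw [one_mul]; gcongr; exact abs_pd_pd_pd_sub_nullDir_le hu ht hr α μ ν

theorem abs_nullForm_le {N : Fin 3 → Fin 3 → Fin 3 → Fin 3 → ℝ} (hnull : NullCond N)
    (hu : ContDiffAt ℝ 3 u X) (ht : 0 ≤ X 0) (hr : 0 < rad X) (v : (Fin 3 → ℝ) → ℝ) :
    |∑ α : Fin 3, ∑ β : Fin 3, ∑ μ : Fin 3, ∑ ν : Fin 3,
        N α β μ ν * pd β v X * pd 0 v X * pd α (pd μ (pd ν u)) X| ≤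
      (∑ α : Fin 3, ∑ β : Fin 3, ∑ μ : Fin 3, ∑ ν : Fin 3, |N α β μ ν|) *
        ((|goodPd 1 v X| + |goodPd 2 v X|) * |pd 0 v X| * absPd3 u X +
          pd 0 v X ^ 2 * (42 * ((absPdGam2 u X + absPdGam u X) / rad X))) := by
  have hcone := hnull _ (nullDir_sq hr.ne')
  -- subtract the null form evaluated on the null direction, which vanishes
  rw [← sub_zero (∑ α : Fin 3, _), ← zero_mul (pd 0 v X ^ 2 * pd 0 (pd 0 (pd 0 u)) X), ← hcone]
  simp only [Finset.sum_mul, ← Finset.sum_sub_distrib]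
  refine abs_sum_sum_sum_sum_le fun α β μ ν => ?_
  calc _ = |N α β μ ν| * |pd β v X * pd 0 v X * pd α (pd μ (pd ν u)) X -
        nullDir X α * nullDir X β * nullDir X μ * nullDir X ν *
          (pd 0 v X ^ 2 * pd 0 (pd 0 (pd 0 u)) X)| := by
        rw [← abs_mul]; congr 1; ring
    _ ≤ _ := mul_le_mul_of_nonneg_left (abs_nullForm_term_sub_le hu ht hr v α β μ ν) (abs_nonneg _)

end NullForm

theorem F3_pointwise_bound_general
    (N : Fin 3 → Fin 3 → Fin 3 → Fin 3 → ℝ) (hnull : NullCond N) :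
    ∃ C : ℝ, 0 < C ∧
      ∀ (a : Fin 7 → ℕ) (u : (Fin 3 → ℝ) → ℝ) (s : Set (Fin 3 → ℝ)), IsOpen s →
        ContDiffOn ℝ (((∑ i, a i) + 4 : ℕ) : ℕ∞) u s →
        ∀ X ∈ s, 0 ≤ X 0 → 1 ≤ rad X →
          |∑ α : Fin 3, ∑ β : Fin 3, ∑ μ : Fin 3, ∑ ν : Fin 3,
              N α β μ ν * pd β (GammaPow a u) X * pd 0 (GammaPow a u) X *
                pd α (pd μ (pd ν u)) X| ≤
            C * ((|X 1 / rad X * pd 0 (GammaPow a u) X + pd 1 (GammaPow a u) X| +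
                  |X 2 / rad X * pd 0 (GammaPow a u) X + pd 2 (GammaPow a u) X|) *
                    |pd 0 (GammaPow a u) X| * absPd3 u X +
                1 / rad X * (pd 0 (GammaPow a u) X) ^ 2 *
                  (absPdGam2 u X + absPdGam u X + absPd u X)) := by
  set M := ∑ α : Fin 3, ∑ β : Fin 3, ∑ μ : Fin 3, ∑ ν : Fin 3, |N α β μ ν|
  have hM : 0 ≤ M := by positivity
  refine ⟨42 * M + 1, by positivity, fun a u s hs hu X hX ht hr => ?_⟩
  have hu3 : ContDiffAt ℝ 3 u X := (hu.contDiffAt (hs.mem_nhds hX)).of_le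
    (WithTop.coe_le_coe.mpr (by exact_mod_cast (by omega : 3 ≤ ∑ i, a i + 4)))
  have hr0 : 0 < rad X := by linarith
  have hbound := abs_nullForm_le hnull hu3 ht hr0 (GammaPow a u)
  rw [goodPd_of_ne_zero (by decide), goodPd_of_ne_zero (by decide)] at hbound
  set P := pd 0 (GammaPow a u) X
  set T := (|X 1 / rad X * P + pd 1 (GammaPow a u) X| +
    |X 2 / rad X * P + pd 2 (GammaPow a u) X|) * |P| * absPd3 u X
  set K := 1 / rad X * P ^ 2 * (absPdGam2 u X + absPdGam u X + absPd u X)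
  have hT : 0 ≤ T := mul_nonneg (by positivity) absPd3_nonneg
  have hK : 0 ≤ K := by
    have := absPdGam2_nonneg (u := u) (X := X); have := absPdGam_nonneg (u := u) (X := X)
    have := absPd_nonneg (z := u) (X := X); positivity
  have hE : P ^ 2 * (42 * ((absPdGam2 u X + absPdGam u X) / rad X)) ≤ 42 * K :=
    calc _ = 42 * (1 / rad X * P ^ 2 * (absPdGam2 u X + absPdGam u X)) := by ring
      _ ≤ 42 * (1 / rad X * P ^ 2 * (absPdGam2 u X + absPdGam u X + absPd u X)) := by
        gcongr 42 * (_ * ?_); exact le_add_of_nonneg_right absPd_nonneg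
  have hfin : M * (T + 42 * K) ≤ (42 * M + 1) * (T + K) := by nlinarith [mul_nonneg hM hT]
  exact hbound.trans ((mul_le_mul_of_nonneg_left (add_le_add_right hE T) hM).trans hfin)

/-- Lemma 3.2, bound for `F₃`: under the symmetry and null conditions,
for `|x| ≥ 1`, `F₃(u) = ∑ N_{αβμν} ∂_βΓ^a u ∂_tΓ^a u ∂_α∂_μ∂_ν u` satisfies
`|F₃(u)| ≲ ∑_{i=1,2} |(ω_i∂_t + ∂_i)Γ^a u| |∂_tΓ^a u| |∂³u|
  + (1/r) |∂_tΓ^a u|² (|∂Γ²u| + |∂Γu| + |∂u|)`. -/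
theorem F3_pointwise_bound
    (N : Fin 3 → Fin 3 → Fin 3 → Fin 3 → ℝ) (hsym : SymCond N) (hnull : NullCond N) :
    ∃ C : ℝ, 0 < C ∧
      ∀ (a : Fin 7 → ℕ) (u : (Fin 3 → ℝ) → ℝ) (s : Set (Fin 3 → ℝ)), IsOpen s →
        ContDiffOn ℝ (((∑ i, a i) + 4 : ℕ) : ℕ∞) u s →
        ∀ X ∈ s, 0 ≤ X 0 → 1 ≤ rad X →
          |∑ α : Fin 3, ∑ β : Fin 3, ∑ μ : Fin 3, ∑ ν : Fin 3,
              N α β μ ν * pd β (GammaPow a u) X * pd 0 (GammaPow a u) X *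
                pd α (pd μ (pd ν u)) X| ≤
            C * ((|X 1 / rad X * pd 0 (GammaPow a u) X + pd 1 (GammaPow a u) X| +
                  |X 2 / rad X * pd 0 (GammaPow a u) X + pd 2 (GammaPow a u) X|) *
                    |pd 0 (GammaPow a u) X| * absPd3 u X +
                1 / rad X * (pd 0 (GammaPow a u) X) ^ 2 *
                  (absPdGam2 u X + absPdGam u X + absPd u X)) :=
  F3_pointwise_bound_general N hnull
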